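/- arXiv:2310.07925 — 5 statements merged into one kernel-verified Lean document; each statement's English description precedes it below -/
import Mathlib

section
/- Under the stated assumptions, the minimizer trajectory is Lipschitz in time with constant K2/m: for any two times s and t with s ≤ t, the unique minimizers satisfy ‖x*(t) − x*(s)‖ ≤ (K2/m)·(t − s). -/
open RealInnerProductSpace

lemma grad_zero_of_min {E : Type*} [NormedAddCommGroup E] [InnerProductSpace ℝ E]
    [CompleteSpace E] {g : E → ℝ} {g' x : E} (h : HasGradientAt g g' x)
    (hmin : IsMinOn g Set.univ x) : g' = 0 := by
  have h1 : IsLocalMin g x := by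
    apply hmin.isLocalMin
    exact Filter.univ_mem
  have h2 := h1.hasFDerivAt_eq_zero h.hasFDerivAt
  have := congrArg (InnerProductSpace.toDual ℝ E).symm h2
  simpa using this

/-- under strong convexity and a `K2` bound on the cross derivative
(equivalently, `K2`-Lipschitz continuity of the gradient map in time), the
minimizer trajectory is Lipschitz in time with constant `K2 / m`:
for all `0 ≤ s ≤ t`, `‖x*(t) − x*(s)‖ ≤ (K2/m)·(t − s)`. -/
theorem minimizer_trajectory_lipschitz
    {E : Type*} [NormedAddCommGroup E] [InnerProductSpace ℝ E] [CompleteSpace E]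
    (f : E → ℝ → ℝ) (gx : E → ℝ → E) (xstar : ℝ → E)
    (m M K2 : ℝ) (hm : 0 < m) (hmM : m ≤ M)
    (hgrad : ∀ (x : E) (t : ℝ), 0 ≤ t → HasGradientAt (fun y => f y t) (gx x t) x)
    (hsc : ∀ (t : ℝ), 0 ≤ t → ∀ x y : E, m * ‖x - y‖ ^ 2 ≤ ⟪gx x t - gx y t, x - y⟫)
    (hLip : ∀ (t : ℝ), 0 ≤ t → ∀ x y : E, ‖gx x t - gx y t‖ ≤ M * ‖x - y‖)
    (hK2 : ∀ (x : E) (s t : ℝ), 0 ≤ s → 0 ≤ t → ‖gx x t - gx x s‖ ≤ K2 * |t - s|)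
    (hmin : ∀ (t : ℝ), 0 ≤ t → IsMinOn (fun y => f y t) Set.univ (xstar t)) :
    ∀ (s t : ℝ), 0 ≤ s → s ≤ t →
      ‖xstar t - xstar s‖ ≤ (K2 / m) * (t - s) := by
  intro s t hs hst
  have ht : 0 ≤ t := hs.trans hst
  have hzt : gx (xstar t) t = 0 :=
    grad_zero_of_min (hgrad (xstar t) t ht) (hmin t ht)
  have hzs : gx (xstar s) s = 0 :=
    grad_zero_of_min (hgrad (xstar s) s hs) (hmin s hs)
  set u := xstar t - xstar s with hu
  have h1 : m * ‖u‖ ^ 2 ≤ ⟪gx (xstar t) t - gx (xstar s) t, u⟫ := hsc t ht _ _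
  have h2 : ⟪gx (xstar t) t - gx (xstar s) t, u⟫ = ⟪gx (xstar s) s - gx (xstar s) t, u⟫ := by
    rw [hzt, hzs]
  have h3 : ⟪gx (xstar s) s - gx (xstar s) t, u⟫ ≤ K2 * (t - s) * ‖u‖ := by
    calc ⟪gx (xstar s) s - gx (xstar s) t, u⟫ ≤ ‖gx (xstar s) s - gx (xstar s) t‖ * ‖u‖ :=
          real_inner_le_norm _ _
      _ ≤ (K2 * |s - t|) * ‖u‖ := by
          have := hK2 (xstar s) t s ht hs
          exact mul_le_mul_of_nonneg_right this (norm_nonneg _)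
      _ = K2 * (t - s) * ‖u‖ := by rw [abs_of_nonpos (by linarith)]; ring_nf
  have key : m * ‖u‖ ^ 2 ≤ K2 * (t - s) * ‖u‖ := by linarith [h1, h2 ▸ h1]
  rcases eq_or_lt_of_le (norm_nonneg u) with h0 | h0
  · rw [← h0]
    have hK2nn : 0 ≤ K2 := by
      have h := hK2 (xstar s) 0 1 le_rfl zero_le_one
      simp at h
      linarith [norm_nonneg (gx (xstar s) 1 - gx (xstar s) 0)]
    have : 0 ≤ t - s := by linarith
    have := div_nonneg hK2nn hm.le
    nlinarith
  · have : m * ‖u‖ ≤ K2 * (t - s) := by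
      have := mul_le_mul_of_nonneg_right key (le_of_lt (inv_pos.mpr h0))
      rw [pow_two] at this
      field_simp at this ⊢
      nlinarith
    rw [div_mul_eq_mul_div, le_div_iff₀ hm]
    nlinarith
end

section
/- (Lemma 1, bound on the cost difference of the optimizer) For consecutive sampling times t_k and t_{k+1} = t_k + δ, the optimal values satisfy |f*(t_{k+1}) − f*(t_k)| ≤ ψ, where ψ = δ(K1 + (δ/2)K3) + (K2²δ²/(2m))(Mδ/m + 2). -/
open RealInnerProductSpace

/-- Lemma 1, bound on the cost difference of the optimizer:
for consecutive sampling times `tk` and `tk + δ`, the optimal values satisfy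
`|f*(tk+δ) − f*(tk)| ≤ ψ` where
`ψ = δ(K1 + (δ/2)K3) + (K2²δ²/(2m))(Mδ/m + 2)`. -/
theorem optimal_cost_difference_bound
    {E : Type*} [NormedAddCommGroup E] [InnerProductSpace ℝ E] [CompleteSpace E]
    (f : E → ℝ → ℝ) (gx : E → ℝ → E) (ft : E → ℝ → ℝ)
    (fxt : E → ℝ → E) (ftt : E → ℝ → ℝ) (xstar : ℝ → E)
    (m M K1 K2 K3 : ℝ) (hm : 0 < m) (hmM : m ≤ M)
    (hgrad : ∀ (x : E) (t : ℝ), 0 ≤ t → HasGradientAt (fun y => f y t) (gx x t) x)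
    (hft : ∀ (x : E) (t : ℝ), 0 ≤ t → HasDerivAt (fun s => f x s) (ft x t) t)
    (hfxt : ∀ (x : E) (t : ℝ), 0 ≤ t → HasDerivAt (fun s => gx x s) (fxt x t) t)
    (hftt : ∀ (x : E) (t : ℝ), 0 ≤ t → HasDerivAt (fun s => ft x s) (ftt x t) t)
    (hsc : ∀ (t : ℝ), 0 ≤ t → ∀ x y : E, m * ‖x - y‖ ^ 2 ≤ ⟪gx x t - gx y t, x - y⟫)
    (hLip : ∀ (t : ℝ), 0 ≤ t → ∀ x y : E, ‖gx x t - gx y t‖ ≤ M * ‖x - y‖)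
    (hK1 : ∀ (x : E) (t : ℝ), 0 ≤ t → |ft x t| ≤ K1)
    (hK2 : ∀ (x : E) (t : ℝ), 0 ≤ t → ‖fxt x t‖ ≤ K2)
    (hK3 : ∀ (x : E) (t : ℝ), 0 ≤ t → |ftt x t| ≤ K3)
    (hmin : ∀ (t : ℝ), 0 ≤ t → IsMinOn (fun y => f y t) Set.univ (xstar t))
    (tk δ : ℝ) (htk : 0 ≤ tk) (hδ : 0 < δ) :
    |f (xstar (tk + δ)) (tk + δ) - f (xstar tk) tk| ≤
      δ * (K1 + δ / 2 * K3) + K2 ^ 2 * δ ^ 2 / (2 * m) * (M * δ / m + 2) := by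
  -- abbreviations
  set x0 := xstar tk with hx0
  set x1 := xstar (tk + δ) with hx1
  have htk1 : (0:ℝ) ≤ tk + δ := by linarith
  have hK1nn : 0 ≤ K1 := le_trans (abs_nonneg _) (hK1 x0 tk htk)
  have hK3nn : 0 ≤ K3 := le_trans (abs_nonneg _) (hK3 x0 tk htk)
  -- for any fixed x, |f x (tk+δ) - f x tk| ≤ K1 * δ
  have key : ∀ x : E, |f x (tk + δ) - f x tk| ≤ K1 * δ := by
    intro x
    have hconv : Convex ℝ (Set.Icc tk (tk + δ)) := convex_Icc _ _
    have hmem1 : tk ∈ Set.Icc tk (tk + δ) := ⟨le_refl _, by linarith⟩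
    have hmem2 : tk + δ ∈ Set.Icc tk (tk + δ) := ⟨by linarith, le_refl _⟩
    have hderiv : ∀ s ∈ Set.Icc tk (tk + δ),
        HasDerivWithinAt (fun s => f x s) (ft x s) (Set.Icc tk (tk + δ)) s := by
      intro s hs
      exact (hft x s (le_trans htk hs.1)).hasDerivWithinAt
    have hbound : ∀ s ∈ Set.Icc tk (tk + δ), ‖ft x s‖ ≤ K1 := by
      intro s hs
      simpa using hK1 x s (le_trans htk hs.1)
    have := hconv.norm_image_sub_le_of_norm_hasDerivWithin_le hderiv hbound hmem1 hmem2
    have h2 : ‖(tk + δ) - tk‖ = δ := by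
      simp [abs_of_pos hδ, Real.norm_eq_abs]
    rw [h2] at this
    simpa [Real.norm_eq_abs] using this
  -- minimality facts
  have hmin0 : f x0 tk ≤ f x1 tk := hmin tk htk (Set.mem_univ x1)
  have hmin1 : f x1 (tk + δ) ≤ f x0 (tk + δ) := hmin (tk + δ) htk1 (Set.mem_univ x0)
  have h1 := abs_le.mp (key x0)
  have h2 := abs_le.mp (key x1)
  have hmain : |f x1 (tk + δ) - f x0 tk| ≤ K1 * δ := by
    rw [abs_le]
    constructor
    · linarith [h2.1]
    · linarith [h1.2]
  -- the extra terms are nonnegative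
  have hextra : 0 ≤ K2 ^ 2 * δ ^ 2 / (2 * m) * (M * δ / m + 2) := by
    apply mul_nonneg
    · positivity
    · have hM : 0 < M := lt_of_lt_of_le hm hmM
      have : 0 ≤ M * δ / m := div_nonneg (mul_nonneg hM.le hδ.le) hm.le
      linarith
  have hK3term : 0 ≤ δ * (δ / 2 * K3) := by positivity
  calc |f x1 (tk + δ) - f x0 tk| ≤ K1 * δ := hmain
    _ ≤ δ * (K1 + δ / 2 * K3) + K2 ^ 2 * δ ^ 2 / (2 * m) * (M * δ / m + 2) := by
        nlinarith
end

section
/- (Prediction-step bound for Algorithm 1, active case) Suppose ‖∇_x f(x_k,t_k)‖ ≥ ε and let x⁻_{k+1} = x_k − δ·(|∇_t f(x_k,t_k)|/‖∇_x f(x_k,t_k)‖²)·∇_x f(x_k,t_k). Then |f(x⁻_{k+1}, t_k + δ) − f(x_k, t_k)| ≤ γ·δ², where γ = 2K1/δ + (M/(2ε²))K1² + K3/2 + K1K2/ε. -/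
open RealInnerProductSpace Set

/-!
Split the increment into a time part `f(x_k, t_k + δ) - f(x_k, t_k)`, bounded by `K1 δ`, and a
space part at the fixed time `t_k + δ`. For the space part, the descent lemma for the
`M`-Lipschitz gradient bounds `f(x⁻, ·) - f(x_k, ·)` by `|⟪∇f, d⟫| + (M/2)‖d‖²` with
`d = x⁻ - x_k`; the gradient at time `t_k + δ` is replaced by `g = ∇_x f(x_k, t_k)` at a cost of
`K2 δ ‖d‖`. The step is chosen so that `⟪g, d⟫ = -δ |∇_t f|` and `‖d‖ = δ |∇_t f| / ‖g‖ ≤ δ K1 / ε`.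
-/

lemma norm_sub_le_mul_of_forall_hasDerivAt {F : Type*} [NormedAddCommGroup F] [NormedSpace ℝ F]
    {f f' : ℝ → F} {C a b : ℝ} (hab : a ≤ b)
    (hf : ∀ t ∈ Icc a b, HasDerivAt f (f' t) t) (bound : ∀ t ∈ Icc a b, ‖f' t‖ ≤ C) :
    ‖f b - f a‖ ≤ C * (b - a) :=
  norm_image_sub_le_of_norm_deriv_le_segment' (fun t ht => (hf t ht).hasDerivWithinAt)
    (fun t ht => bound t (Ico_subset_Icc_self ht)) b (right_mem_Icc.2 hab)

section Step

variable {E : Type*} [NormedAddCommGroup E] [InnerProductSpace ℝ E]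

lemma inner_div_norm_sq_smul_self (c : ℝ) {g : E} (hg : g ≠ 0) : ⟪g, (c / ‖g‖ ^ 2) • g⟫ = c := by
  rw [real_inner_smul_right, real_inner_self_eq_norm_sq]
  field_simp [norm_ne_zero_iff.2 hg]

lemma norm_div_norm_sq_smul_self (c : ℝ) (g : E) : ‖(c / ‖g‖ ^ 2) • g‖ = |c| / ‖g‖ := by
  rw [norm_smul, Real.norm_eq_abs, abs_div, abs_pow, abs_norm]
  rcases eq_or_ne ‖g‖ 0 with h | h
  · simp [h]
  · field_simp

end Step

section Gradient

variable {E : Type*} [NormedAddCommGroup E] [InnerProductSpace ℝ E] [CompleteSpace E]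
  {φ : E → ℝ} {g : E → E} {M : ℝ}

theorem abs_sub_sub_inner_le_of_lipschitz_gradient (hg : ∀ x, HasGradientAt φ (g x) x)
    (hLip : ∀ x y, ‖g x - g y‖ ≤ M * ‖x - y‖) (x y : E) :
    |φ y - φ x - ⟪g x, y - x⟫| ≤ M / 2 * ‖y - x‖ ^ 2 := by
  set v := y - x
  have hline (s : ℝ) : HasDerivAt (fun s : ℝ => x + s • v) v s := by
    simpa using ((hasDerivAt_id s).smul_const v).const_add x
  have hderiv (s : ℝ) : HasDerivAt (fun s => φ (x + s • v) - φ x - s * ⟪g x, v⟫)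
      ⟪g (x + s • v) - g x, v⟫ s := by
    rw [inner_sub_left]
    exact (((hg _).hasFDerivAt.comp_hasDerivAt s (hline s)).sub_const _).sub
      (hasDerivAt_mul_const _)
  have hbound (s : ℝ) (hs : s ∈ Ico (0 : ℝ) 1) :
      ‖⟪g (x + s • v) - g x, v⟫‖ ≤ M * ‖v‖ ^ 2 * s := by
    calc ‖⟪g (x + s • v) - g x, v⟫‖ ≤ ‖g (x + s • v) - g x‖ * ‖v‖ := norm_inner_le_norm _ _
      _ ≤ M * ‖s • v‖ * ‖v‖ := by gcongr; simpa using hLip (x + s • v) x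
      _ = M * ‖v‖ ^ 2 * s := by rw [norm_smul, Real.norm_of_nonneg hs.1]; ring
  have key := image_norm_le_of_norm_deriv_right_le_deriv_boundary
    (fun s _ => (hderiv s).continuousAt.continuousWithinAt)
    (fun s _ => (hderiv s).hasDerivWithinAt) (B := fun s => M * ‖v‖ ^ 2 / 2 * s ^ 2)
    (by simp) (B' := fun s => M * ‖v‖ ^ 2 * s)
    (fun s => ((hasDerivAt_pow 2 s).const_mul _).congr_deriv (by norm_num; ring))
    hbound (right_mem_Icc.2 zero_le_one)
  simp only [one_smul, one_mul, one_pow, mul_one, Real.norm_eq_abs, v, add_sub_cancel] at key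
  rwa [div_mul_eq_mul_div]

theorem abs_sub_le_of_lipschitz_gradient (hg : ∀ x, HasGradientAt φ (g x) x)
    (hLip : ∀ x y, ‖g x - g y‖ ≤ M * ‖x - y‖) (x y w : E) :
    |φ y - φ x| ≤ |⟪w, y - x⟫| + ‖g x - w‖ * ‖y - x‖ + M / 2 * ‖y - x‖ ^ 2 := by
  have hdesc := abs_sub_sub_inner_le_of_lipschitz_gradient hg hLip x y
  have hsplit : ⟪g x, y - x⟫ = ⟪w, y - x⟫ + ⟪g x - w, y - x⟫ := by rw [inner_sub_left]; ring
  have hcs := abs_real_inner_le_norm (g x - w) (y - x)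
  rw [hsplit] at hdesc
  have := abs_sub_abs_le_abs_sub (φ y - φ x) (⟪w, y - x⟫ + ⟪g x - w, y - x⟫)
  have := abs_add_le ⟪w, y - x⟫ ⟪g x - w, y - x⟫
  linarith

theorem abs_sub_le_of_normalized_step (hg : ∀ x, HasGradientAt φ (g x) x)
    (hLip : ∀ x y, ‖g x - g y‖ ≤ M * ‖x - y‖) (hM : 0 ≤ M) {x w : E} {c C ε η : ℝ}
    (hε : 0 < ε) (hw : ε ≤ ‖w‖) (hc : 0 ≤ c) (hcC : c ≤ C) (hη : ‖g x - w‖ ≤ η) :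
    |φ (x - (c / ‖w‖ ^ 2) • w) - φ x| ≤ C + η * (C / ε) + M / 2 * (C / ε) ^ 2 := by
  set y := x - (c / ‖w‖ ^ 2) • w
  have hstep : ‖y - x‖ ≤ C / ε := by
    rw [sub_sub_cancel_left, norm_neg, norm_div_norm_sq_smul_self, abs_of_nonneg hc]
    exact div_le_div₀ (hc.trans hcC) hcC hε hw
  have hinner : |⟪w, y - x⟫| = c := by
    rw [sub_sub_cancel_left, inner_neg_right, abs_neg,
      inner_div_norm_sq_smul_self _ (norm_pos_iff.1 (hε.trans_le hw)), abs_of_nonneg hc]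
  have hdrift : ‖g x - w‖ * ‖y - x‖ ≤ η * (C / ε) :=
    mul_le_mul hη hstep (norm_nonneg _) ((norm_nonneg _).trans hη)
  have hcurv : M / 2 * ‖y - x‖ ^ 2 ≤ M / 2 * (C / ε) ^ 2 := by gcongr
  have := abs_sub_le_of_lipschitz_gradient hg hLip x y w
  linarith

end Gradient

theorem prediction_step_bound_active_general
    {E : Type*} [NormedAddCommGroup E] [InnerProductSpace ℝ E] [CompleteSpace E]
    (f : E → ℝ → ℝ) (gx : E → ℝ → E) (ft : E → ℝ → ℝ)
    (fxt : E → ℝ → E) (ftt : E → ℝ → ℝ)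
    (m M K1 K2 K3 : ℝ) (hm : 0 < m) (hmM : m ≤ M)
    (hgrad : ∀ (x : E) (t : ℝ), 0 ≤ t → HasGradientAt (fun y => f y t) (gx x t) x)
    (hft : ∀ (x : E) (t : ℝ), 0 ≤ t → HasDerivAt (fun s => f x s) (ft x t) t)
    (hfxt : ∀ (x : E) (t : ℝ), 0 ≤ t → HasDerivAt (fun s => gx x s) (fxt x t) t)
    (hLip : ∀ (t : ℝ), 0 ≤ t → ∀ x y : E, ‖gx x t - gx y t‖ ≤ M * ‖x - y‖)
    (hK1 : ∀ (x : E) (t : ℝ), 0 ≤ t → |ft x t| ≤ K1)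
    (hK2 : ∀ (x : E) (t : ℝ), 0 ≤ t → ‖fxt x t‖ ≤ K2)
    (hK3 : ∀ (x : E) (t : ℝ), 0 ≤ t → |ftt x t| ≤ K3)
    (xk : E) (tk δ ε : ℝ) (htk : 0 ≤ tk) (hδ : 0 < δ) (hε : 0 < ε)
    (hactive : ε ≤ ‖gx xk tk‖) :
    |f (xk - (δ * |ft xk tk| / ‖gx xk tk‖ ^ 2) • gx xk tk) (tk + δ) - f xk tk|
      ≤ (2 * K1 / δ + M / (2 * ε ^ 2) * K1 ^ 2 + K3 / 2 + K1 * K2 / ε) * δ ^ 2 := by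
  have hIcc : ∀ t ∈ Icc tk (tk + δ), 0 ≤ t := fun t ht => htk.trans ht.1
  have hlen : tk ≤ tk + δ := by linarith
  have htime : |f xk (tk + δ) - f xk tk| ≤ K1 * δ := by
    simpa using norm_sub_le_mul_of_forall_hasDerivAt hlen (fun t ht => hft xk t (hIcc t ht))
      (fun t ht => hK1 xk t (hIcc t ht))
  have hgtime : ‖gx xk (tk + δ) - gx xk tk‖ ≤ K2 * δ := by
    simpa using norm_sub_le_mul_of_forall_hasDerivAt hlen (fun t ht => hfxt xk t (hIcc t ht))
      (fun t ht => hK2 xk t (hIcc t ht))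
  have ht' : 0 ≤ tk + δ := by linarith
  have hspace := abs_sub_le_of_normalized_step (fun x => hgrad x _ ht') (hLip _ ht')
    (hm.le.trans hmM) hε hactive (mul_nonneg hδ.le (abs_nonneg _))
    (mul_le_mul_of_nonneg_left (hK1 xk tk htk) hδ.le) hgtime
  have hK3 : 0 ≤ K3 / 2 * δ ^ 2 := by
    have := (abs_nonneg _).trans (hK3 xk tk htk)
    positivity
  have hγ : (2 * K1 / δ + M / (2 * ε ^ 2) * K1 ^ 2 + K3 / 2 + K1 * K2 / ε) * δ ^ 2
      = δ * K1 + K2 * δ * (δ * K1 / ε) + M / 2 * (δ * K1 / ε) ^ 2 + K1 * δ + K3 / 2 * δ ^ 2 := by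
    field_simp
    ring
  have := abs_sub_le (f (xk - (δ * |ft xk tk| / ‖gx xk tk‖ ^ 2) • gx xk tk) (tk + δ))
    (f xk (tk + δ)) (f xk tk)
  linarith

/-- prediction-step bound for Algorithm 1, active case: if
`‖∇_x f(x_k,t_k)‖ ≥ ε` and
`x⁻ = x_k − δ(|∇_t f(x_k,t_k)|/‖∇_x f(x_k,t_k)‖²)∇_x f(x_k,t_k)`, then
`|f(x⁻, t_k + δ) − f(x_k, t_k)| ≤ γ·δ²` with
`γ = 2K1/δ + (M/(2ε²))K1² + K3/2 + K1K2/ε`. -/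
theorem prediction_step_bound_active
    {E : Type*} [NormedAddCommGroup E] [InnerProductSpace ℝ E] [CompleteSpace E]
    (f : E → ℝ → ℝ) (gx : E → ℝ → E) (ft : E → ℝ → ℝ)
    (fxt : E → ℝ → E) (ftt : E → ℝ → ℝ)
    (m M K1 K2 K3 : ℝ) (hm : 0 < m) (hmM : m ≤ M)
    (hgrad : ∀ (x : E) (t : ℝ), 0 ≤ t → HasGradientAt (fun y => f y t) (gx x t) x)
    (hft : ∀ (x : E) (t : ℝ), 0 ≤ t → HasDerivAt (fun s => f x s) (ft x t) t)
    (hfxt : ∀ (x : E) (t : ℝ), 0 ≤ t → HasDerivAt (fun s => gx x s) (fxt x t) t)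
    (hftt : ∀ (x : E) (t : ℝ), 0 ≤ t → HasDerivAt (fun s => ft x s) (ftt x t) t)
    (hsc : ∀ (t : ℝ), 0 ≤ t → ∀ x y : E, m * ‖x - y‖ ^ 2 ≤ ⟪gx x t - gx y t, x - y⟫)
    (hLip : ∀ (t : ℝ), 0 ≤ t → ∀ x y : E, ‖gx x t - gx y t‖ ≤ M * ‖x - y‖)
    (hK1 : ∀ (x : E) (t : ℝ), 0 ≤ t → |ft x t| ≤ K1)
    (hK2 : ∀ (x : E) (t : ℝ), 0 ≤ t → ‖fxt x t‖ ≤ K2)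
    (hK3 : ∀ (x : E) (t : ℝ), 0 ≤ t → |ftt x t| ≤ K3)
    (xk : E) (tk δ ε : ℝ) (htk : 0 ≤ tk) (hδ : 0 < δ) (hε : 0 < ε)
    (hactive : ε ≤ ‖gx xk tk‖) :
    |f (xk - (δ * |ft xk tk| / ‖gx xk tk‖ ^ 2) • gx xk tk) (tk + δ) - f xk tk|
      ≤ (2 * K1 / δ + M / (2 * ε ^ 2) * K1 ^ 2 + K3 / 2 + K1 * K2 / ε) * δ ^ 2 :=
  prediction_step_bound_active_general f gx ft fxt ftt m M K1 K2 K3 hm hmM hgrad hft hfxt hLip hK1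
    hK2 hK3 xk tk δ ε htk hδ hε hactive
end

section
/- (One-step error recursion for Algorithm 1) Let x⁻_{k+1} = x_k − δ·(|∇_t f(x_k,t_k)|/‖∇_x f(x_k,t_k)‖²)·∇_x f(x_k,t_k) if ‖∇_x f(x_k,t_k)‖ ≥ ε and x⁻_{k+1} = x_k otherwise, followed by the update x_{k+1} = x⁻_{k+1} − α·∇_x f(x⁻_{k+1}, t_{k+1}) with 0 < α ≤ 1/(2M). Then f(x_{k+1},t_{k+1}) − f*(t_{k+1}) ≤ (1 − 2καm)·max(γδ², μδ) + (1 − 2καm)·(f(x_k,t_k) − f*(t_k)) + (1 − 2καm)·ψ, where κ = 1 − αM/2, γ = 2K1/δ + (M/(2ε²))K1² + K3/2 + K1K2/ε, μ = K1 + (δ/2)K3, and ψ = δ(K1 + (δ/2)K3) + (K2²δ²/(2m))(Mδ/m + 2). -/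
/-!
The gradient step at time `t_{k+1}` contracts the optimality gap by `1 - 2καm`: the descent
lemma of an `M`-smooth function lowers the cost by `ακ‖∇f‖²`, and strong convexity gives the
Polyak–Łojasiewicz inequality `‖∇f‖² ≥ 2m (f - f*)`. Before that step, the gap grows by at most
the cost of the prediction step, which the descent lemma bounds by `M/2 · (δK1/ε)²` because
its first-order term is nonpositive, plus the time drift `K1δ` of the cost and of the optimal
value; all of these fit into `max(γδ², μδ)` and `ψ`.
-/

open RealInnerProductSpace Set

lemma sub_le_sub_of_hasDerivAt_le {φ ψ φ' ψ' : ℝ → ℝ} {a b : ℝ} (hab : a ≤ b)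
    (hφ : ∀ s, HasDerivAt φ (φ' s) s) (hψ : ∀ s, HasDerivAt ψ (ψ' s) s)
    (hle : ∀ s ∈ Ioo a b, φ' s ≤ ψ' s) : φ b - φ a ≤ ψ b - ψ a := by
  have hmono : MonotoneOn (ψ - φ) (Icc a b) := by
    refine monotoneOn_of_hasDerivWithinAt_nonneg (convex_Icc a b)
      (fun s _ ↦ ((hψ s).sub (hφ s)).continuousAt.continuousWithinAt)
      (fun s _ ↦ ((hψ s).sub (hφ s)).hasDerivWithinAt) ?_
    rw [interior_Icc]
    exact fun s hs ↦ sub_nonneg.2 (hle s hs)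
  have := hmono (left_mem_Icc.2 hab) (right_mem_Icc.2 hab) hab
  simp only [Pi.sub_apply] at this
  linarith

section Gradient

variable {E : Type*} [NormedAddCommGroup E] [InnerProductSpace ℝ E] [CompleteSpace E]
  {f : E → ℝ} {f' : E → E}

lemma HasGradientAt.hasDerivAt_add_smul {g x v : E} {s : ℝ}
    (h : HasGradientAt f g (x + s • v)) :
    HasDerivAt (fun s : ℝ ↦ f (x + s • v)) ⟪g, v⟫ s := by
  have hline : HasDerivAt (fun s : ℝ ↦ x + s • v) v s := by
    simpa using ((hasDerivAt_id s).smul_const v).const_add x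
  simpa [InnerProductSpace.toDual_apply_apply, Function.comp_def] using
    h.hasFDerivAt.comp_hasDerivAt s hline

lemma hasDerivAt_quadratic (c d s : ℝ) :
    HasDerivAt (fun s : ℝ ↦ s * c + d / 2 * s ^ 2) (c + d * s) s := by
  refine (((hasDerivAt_id' s).mul_const c).add
    ((hasDerivAt_pow 2 s).const_mul (d / 2))).congr_deriv ?_
  push_cast
  ring

lemma apply_add_le_of_lipschitz_gradient {M : ℝ} (hf : ∀ y, HasGradientAt f (f' y) y)
    (hLip : ∀ x y, ‖f' x - f' y‖ ≤ M * ‖x - y‖) (x v : E) :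
    f (x + v) ≤ f x + ⟪f' x, v⟫ + M / 2 * ‖v‖ ^ 2 := by
  have key := sub_le_sub_of_hasDerivAt_le zero_le_one (fun s ↦ (hf _).hasDerivAt_add_smul)
    (fun s ↦ hasDerivAt_quadratic ⟪f' x, v⟫ (M * ‖v‖ ^ 2) s) fun s hs ↦ by
      calc ⟪f' (x + s • v), v⟫ = ⟪f' x, v⟫ + ⟪f' (x + s • v) - f' x, v⟫ := by
            rw [inner_sub_left]; ring
        _ ≤ ⟪f' x, v⟫ + M * ‖(x + s • v) - x‖ * ‖v‖ := by
            gcongr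
            exact (real_inner_le_norm _ _).trans
              (mul_le_mul_of_nonneg_right (hLip _ _) (norm_nonneg v))
        _ = ⟪f' x, v⟫ + M * ‖v‖ ^ 2 * s := by
            rw [add_sub_cancel_left, norm_smul, Real.norm_of_nonneg hs.1.le]; ring
  simp only [zero_smul, add_zero, one_smul] at key
  linarith

lemma le_apply_add_of_strongly_monotone_gradient {m : ℝ} (hf : ∀ y, HasGradientAt f (f' y) y)
    (hsc : ∀ x y, m * ‖x - y‖ ^ 2 ≤ ⟪f' x - f' y, x - y⟫) (x v : E) :
    f x + ⟪f' x, v⟫ + m / 2 * ‖v‖ ^ 2 ≤ f (x + v) := by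
  have key := sub_le_sub_of_hasDerivAt_le zero_le_one
    (fun s ↦ hasDerivAt_quadratic ⟪f' x, v⟫ (m * ‖v‖ ^ 2) s)
    (fun s ↦ (hf _).hasDerivAt_add_smul) fun s hs ↦ by
      have h := hsc (x + s • v) x
      rw [add_sub_cancel_left, norm_smul, Real.norm_of_nonneg hs.1.le,
        real_inner_smul_right] at h
      have : m * ‖v‖ ^ 2 * s ≤ ⟪f' (x + s • v) - f' x, v⟫ :=
        le_of_mul_le_mul_left (by nlinarith) hs.1
      rw [inner_sub_left] at this
      linarith
  simp only [zero_smul, add_zero, one_smul] at key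
  linarith

lemma sub_le_norm_gradient_sq_div {m : ℝ} (hm : 0 < m) (hf : ∀ y, HasGradientAt f (f' y) y)
    (hsc : ∀ x y, m * ‖x - y‖ ^ 2 ≤ ⟪f' x - f' y, x - y⟫) (x z : E) :
    f x - f z ≤ ‖f' x‖ ^ 2 / (2 * m) := by
  have hlow := le_apply_add_of_strongly_monotone_gradient hf hsc x (z - x)
  rw [add_sub_cancel] at hlow
  have hinner := neg_le_of_abs_le (abs_real_inner_le_norm (f' x) (z - x))
  -- `‖g‖‖v‖ - m/2 ‖v‖² ≤ ‖g‖²/(2m)` is AM-GM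
  rw [le_div_iff₀ (by positivity)]
  nlinarith [sq_nonneg (‖f' x‖ - m * ‖z - x‖)]

lemma apply_sub_smul_gradient_le {M : ℝ} (hf : ∀ y, HasGradientAt f (f' y) y)
    (hLip : ∀ x y, ‖f' x - f' y‖ ≤ M * ‖x - y‖) (x : E) (c : ℝ) :
    f (x - c • f' x) ≤ f x - c * (1 - c * M / 2) * ‖f' x‖ ^ 2 := by
  have h := apply_add_le_of_lipschitz_gradient hf hLip x (-(c • f' x))
  rw [← sub_eq_add_neg, inner_neg_right, real_inner_smul_right, real_inner_self_eq_norm_sq,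
    norm_neg, norm_smul, mul_pow, Real.norm_eq_abs, sq_abs] at h
  linarith

lemma apply_sub_smul_gradient_sub_le {m M α : ℝ} (hm : 0 < m)
    (hf : ∀ y, HasGradientAt f (f' y) y) (hLip : ∀ x y, ‖f' x - f' y‖ ≤ M * ‖x - y‖)
    (hsc : ∀ x y, m * ‖x - y‖ ^ 2 ≤ ⟪f' x - f' y, x - y⟫) (hα : 0 ≤ α) (hαM : α * M ≤ 2)
    (x z : E) :
    f (x - α • f' x) - f z ≤ (1 - 2 * (1 - α * M / 2) * α * m) * (f x - f z) := by
  have hstep := apply_sub_smul_gradient_le hf hLip x α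
  have hpl := sub_le_norm_gradient_sq_div hm hf hsc x z
  rw [le_div_iff₀ (by positivity)] at hpl
  have hκ : 0 ≤ α * (1 - α * M / 2) := mul_nonneg hα (by linarith)
  nlinarith [mul_le_mul_of_nonneg_left hpl hκ]

lemma apply_sub_normalized_gradient_le {M ε δ K a : ℝ} (hf : ∀ y, HasGradientAt f (f' y) y)
    (hLip : ∀ x y, ‖f' x - f' y‖ ≤ M * ‖x - y‖) (hM : 0 ≤ M) (hε : 0 < ε) (hδ : 0 ≤ δ)
    (ha : |a| ≤ K) {x : E} (hx : ε ≤ ‖f' x‖) :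
    f (x - (δ * |a| / ‖f' x‖ ^ 2) • f' x) ≤ f x + M / 2 * (δ * K / ε) ^ 2 := by
  have hstep := apply_sub_smul_gradient_le hf hLip x (δ * |a| / ‖f' x‖ ^ 2)
  have hg : 0 < ‖f' x‖ := hε.trans_le hx
  have hdescent : δ * |a| / ‖f' x‖ ^ 2 * ‖f' x‖ ^ 2 = δ * |a| := by field_simp
  have hcurv : (δ * |a| / ‖f' x‖ ^ 2) ^ 2 * ‖f' x‖ ^ 2 ≤ (δ * K / ε) ^ 2 := by
    calc (δ * |a| / ‖f' x‖ ^ 2) ^ 2 * ‖f' x‖ ^ 2 = (δ * |a| / ‖f' x‖) ^ 2 := by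
          field_simp
      _ ≤ (δ * K / ε) ^ 2 := by
          have : 0 ≤ K := (abs_nonneg a).trans ha
          gcongr
  have := mul_le_mul_of_nonneg_left hcurv (by positivity : 0 ≤ M / 2)
  nlinarith [mul_nonneg hδ (abs_nonneg a)]

lemma apply_prediction_step_le {f₀ f₁ : E → ℝ} {M K₁ K₂ K₃ δ ε a : ℝ}
    (hf : ∀ y, HasGradientAt f₀ (f' y) y) (hLip : ∀ x y, ‖f' x - f' y‖ ≤ M * ‖x - y‖)
    (hM : 0 ≤ M) (hK₂ : 0 ≤ K₂) (hK₃ : 0 ≤ K₃) (hδ : 0 < δ) (hε : 0 < ε) (ha : |a| ≤ K₁)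
    (hdrift : ∀ y, f₁ y - f₀ y ≤ K₁ * δ) (x : E) :
    f₁ (if ε ≤ ‖f' x‖ then x - (δ * |a| / ‖f' x‖ ^ 2) • f' x else x) ≤
      f₀ x + max ((2 * K₁ / δ + M / (2 * ε ^ 2) * K₁ ^ 2 + K₃ / 2 + K₁ * K₂ / ε) * δ ^ 2)
        ((K₁ + δ / 2 * K₃) * δ) := by
  have hK₁ : 0 ≤ K₁ := (abs_nonneg a).trans ha
  set γ := 2 * K₁ / δ + M / (2 * ε ^ 2) * K₁ ^ 2 + K₃ / 2 + K₁ * K₂ / ε with hγ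
  set μ := K₁ + δ / 2 * K₃ with hμ
  split_ifs with hx
  · have hjump := apply_sub_normalized_gradient_le hf hLip hM hε hδ.le ha hx
    have hslack : γ * δ ^ 2 - (K₁ * δ + M / 2 * (δ * K₁ / ε) ^ 2)
        = K₁ * δ + K₃ / 2 * δ ^ 2 + K₁ * K₂ / ε * δ ^ 2 := by
      rw [hγ]; field_simp; ring
    have : 0 ≤ K₁ * δ + K₃ / 2 * δ ^ 2 + K₁ * K₂ / ε * δ ^ 2 := by positivity
    linarith [hdrift (x - (δ * |a| / ‖f' x‖ ^ 2) • f' x), le_max_left (γ * δ ^ 2) (μ * δ)]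
  · have : K₁ * δ ≤ μ * δ := by nlinarith [mul_nonneg (sq_nonneg δ) hK₃]
    linarith [hdrift x, le_max_right (γ * δ ^ 2) (μ * δ)]

end Gradient

theorem alg1_one_step_recursion_general
    {E : Type*} [NormedAddCommGroup E] [InnerProductSpace ℝ E] [CompleteSpace E]
    (f : E → ℝ → ℝ) (gx : E → ℝ → E) (ft : E → ℝ → ℝ)
    (fxt : E → ℝ → E) (ftt : E → ℝ → ℝ) (xstar : ℝ → E)
    (m M K1 K2 K3 : ℝ) (hm : 0 < m) (hmM : m ≤ M)
    (hgrad : ∀ (x : E) (t : ℝ), 0 ≤ t → HasGradientAt (fun y => f y t) (gx x t) x)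
    (hft : ∀ (x : E) (t : ℝ), 0 ≤ t → HasDerivAt (fun s => f x s) (ft x t) t)
    (hsc : ∀ (t : ℝ), 0 ≤ t → ∀ x y : E, m * ‖x - y‖ ^ 2 ≤ ⟪gx x t - gx y t, x - y⟫)
    (hLip : ∀ (t : ℝ), 0 ≤ t → ∀ x y : E, ‖gx x t - gx y t‖ ≤ M * ‖x - y‖)
    (hK1 : ∀ (x : E) (t : ℝ), 0 ≤ t → |ft x t| ≤ K1)
    (hK2 : ∀ (x : E) (t : ℝ), 0 ≤ t → ‖fxt x t‖ ≤ K2)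
    (hK3 : ∀ (x : E) (t : ℝ), 0 ≤ t → |ftt x t| ≤ K3)
    (hmin : ∀ (t : ℝ), 0 ≤ t → IsMinOn (fun y => f y t) Set.univ (xstar t))
    (xk : E) (tk δ ε α : ℝ) (htk : 0 ≤ tk) (hδ : 0 < δ) (hε : 0 < ε)
    (hα : 0 < α) (hαM : α ≤ 1 / (2 * M))
    (xminus xnext : E)
    (hxminus : xminus =
      if ε ≤ ‖gx xk tk‖ then
        xk - (δ * |ft xk tk| / ‖gx xk tk‖ ^ 2) • gx xk tk
      else xk)
    (hxnext : xnext = xminus - α • gx xminus (tk + δ))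
    (κ γ μ ψ : ℝ)
    (hκ : κ = 1 - α * M / 2)
    (hγ : γ = 2 * K1 / δ + M / (2 * ε ^ 2) * K1 ^ 2 + K3 / 2 + K1 * K2 / ε)
    (hμ : μ = K1 + δ / 2 * K3)
    (hψ : ψ = δ * (K1 + δ / 2 * K3) + K2 ^ 2 * δ ^ 2 / (2 * m) * (M * δ / m + 2)) :
    f xnext (tk + δ) - f (xstar (tk + δ)) (tk + δ) ≤
      (1 - 2 * κ * α * m) * max (γ * δ ^ 2) (μ * δ)
        + (1 - 2 * κ * α * m) * (f xk tk - f (xstar tk) tk)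
        + (1 - 2 * κ * α * m) * ψ := by
  have hM : 0 < M := hm.trans_le hmM
  have hαM' : α * M ≤ 1 / 2 := by
    rw [le_div_iff₀ (by positivity)] at hαM
    linarith
  have ht' : 0 ≤ tk + δ := by linarith
  have hK1nn : 0 ≤ K1 := (abs_nonneg _).trans (hK1 xk tk htk)
  have hK2nn : 0 ≤ K2 := (norm_nonneg _).trans (hK2 xk tk htk)
  have hK3nn : 0 ≤ K3 := (abs_nonneg _).trans (hK3 xk tk htk)
  have hdrift (x : E) : |f x (tk + δ) - f x tk| ≤ K1 * δ := by
    simpa [abs_of_pos hδ] using (convex_Ici 0).norm_image_sub_le_of_norm_hasDerivWithin_le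
      (fun s hs ↦ (hft x s hs).hasDerivWithinAt) (fun s hs ↦ hK1 x s hs) htk ht'
  have hcontract := apply_sub_smul_gradient_sub_le hm (hgrad · _ ht') (hLip _ ht') (hsc _ ht')
    hα.le (by linarith) xminus (xstar (tk + δ))
  have hpredict := apply_prediction_step_le (hgrad · tk htk) (hLip tk htk) hM.le hK2nn hK3nn hδ
    hε (hK1 xk tk htk) (fun y ↦ le_of_abs_le (hdrift y)) xk
  rw [← hxminus, ← hγ, ← hμ] at hpredict
  have hoptimum : f (xstar tk) tk - f (xstar (tk + δ)) (tk + δ) ≤ ψ := by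
    have hle : f (xstar tk) tk ≤ f (xstar (tk + δ)) tk := hmin tk htk (mem_univ _)
    have hψ' : K1 * δ ≤ ψ := by
      rw [hψ]
      nlinarith [show 0 ≤ K2 ^ 2 * δ ^ 2 / (2 * m) * (M * δ / m + 2) by positivity]
    linarith [neg_le_of_abs_le (hdrift (xstar (tk + δ)))]
  have hρ : 0 ≤ 1 - 2 * κ * α * m := by
    rw [hκ]
    nlinarith [mul_le_mul_of_nonneg_left hmM hα.le, mul_pos (mul_pos hα hM) (mul_pos hα hm)]
  rw [← hκ] at hcontract
  rw [hxnext]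
  calc _ ≤ (1 - 2 * κ * α * m) * (f xminus (tk + δ) - f (xstar (tk + δ)) (tk + δ)) := hcontract
    _ ≤ (1 - 2 * κ * α * m) * (max (γ * δ ^ 2) (μ * δ) + (f xk tk - f (xstar tk) tk) + ψ) := by
      gcongr; linarith
    _ = _ := by ring

/-- one-step error recursion for Algorithm 1: with the prediction
step of Algorithm 1 followed by the gradient update with `0 < α ≤ 1/(2M)`,
`f(x_{k+1},t_{k+1}) − f*(t_{k+1}) ≤ (1−2καm)·max(γδ², μδ)
  + (1−2καm)(f(x_k,t_k) − f*(t_k)) + (1−2καm)·ψ`. -/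
theorem alg1_one_step_recursion
    {E : Type*} [NormedAddCommGroup E] [InnerProductSpace ℝ E] [CompleteSpace E]
    (f : E → ℝ → ℝ) (gx : E → ℝ → E) (ft : E → ℝ → ℝ)
    (fxt : E → ℝ → E) (ftt : E → ℝ → ℝ) (xstar : ℝ → E)
    (m M K1 K2 K3 : ℝ) (hm : 0 < m) (hmM : m ≤ M)
    (hgrad : ∀ (x : E) (t : ℝ), 0 ≤ t → HasGradientAt (fun y => f y t) (gx x t) x)
    (hft : ∀ (x : E) (t : ℝ), 0 ≤ t → HasDerivAt (fun s => f x s) (ft x t) t)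
    (hfxt : ∀ (x : E) (t : ℝ), 0 ≤ t → HasDerivAt (fun s => gx x s) (fxt x t) t)
    (hftt : ∀ (x : E) (t : ℝ), 0 ≤ t → HasDerivAt (fun s => ft x s) (ftt x t) t)
    (hsc : ∀ (t : ℝ), 0 ≤ t → ∀ x y : E, m * ‖x - y‖ ^ 2 ≤ ⟪gx x t - gx y t, x - y⟫)
    (hLip : ∀ (t : ℝ), 0 ≤ t → ∀ x y : E, ‖gx x t - gx y t‖ ≤ M * ‖x - y‖)
    (hK1 : ∀ (x : E) (t : ℝ), 0 ≤ t → |ft x t| ≤ K1)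
    (hK2 : ∀ (x : E) (t : ℝ), 0 ≤ t → ‖fxt x t‖ ≤ K2)
    (hK3 : ∀ (x : E) (t : ℝ), 0 ≤ t → |ftt x t| ≤ K3)
    (hmin : ∀ (t : ℝ), 0 ≤ t → IsMinOn (fun y => f y t) Set.univ (xstar t))
    (xk : E) (tk δ ε α : ℝ) (htk : 0 ≤ tk) (hδ : 0 < δ) (hε : 0 < ε)
    (hα : 0 < α) (hαM : α ≤ 1 / (2 * M))
    (xminus xnext : E)
    (hxminus : xminus =
      if ε ≤ ‖gx xk tk‖ then
        xk - (δ * |ft xk tk| / ‖gx xk tk‖ ^ 2) • gx xk tk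
      else xk)
    (hxnext : xnext = xminus - α • gx xminus (tk + δ))
    (κ γ μ ψ : ℝ)
    (hκ : κ = 1 - α * M / 2)
    (hγ : γ = 2 * K1 / δ + M / (2 * ε ^ 2) * K1 ^ 2 + K3 / 2 + K1 * K2 / ε)
    (hμ : μ = K1 + δ / 2 * K3)
    (hψ : ψ = δ * (K1 + δ / 2 * K3) + K2 ^ 2 * δ ^ 2 / (2 * m) * (M * δ / m + 2)) :
    f xnext (tk + δ) - f (xstar (tk + δ)) (tk + δ) ≤
      (1 - 2 * κ * α * m) * max (γ * δ ^ 2) (μ * δ)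
        + (1 - 2 * κ * α * m) * (f xk tk - f (xstar tk) tk)
        + (1 - 2 * κ * α * m) * ψ :=
  alg1_one_step_recursion_general f gx ft fxt ftt xstar m M K1 K2 K3 hm hmM hgrad hft hsc hLip hK1
    hK2 hK3 hmin xk tk δ ε α htk hδ hε hα hαM xminus xnext hxminus hxnext κ γ μ ψ hκ hγ hμ hψ
end

section
/- (One-step error recursion for Algorithm 2) Let x⁻_{k+1} = x_k − (|f(x_k,t_k) − f(x_k,t_{k−1})|/‖∇_x f(x_k,t_k)‖²)·∇_x f(x_k,t_k) if ‖∇_x f(x_k,t_k)‖ ≥ ε and x⁻_{k+1} = x_k otherwise (with t_{k−1} = t_k − δ), followed by the update x_{k+1} = x⁻_{k+1} − α·∇_x f(x⁻_{k+1}, t_{k+1}) with 0 < α ≤ 1/(2M). Then f(x_{k+1},t_{k+1}) − f*(t_{k+1}) ≤ (1 − 2καm)·max(γ'δ², μδ) + (1 − 2καm)·(f(x_k,t_k) − f*(t_k)) + (1 − 2καm)·ψ, where κ = 1 − αM/2, γ' = K3 + 2K1/δ + K1²M/ε² + K2(K1 + (δ/2)K3)/ε + δ²K3²M/(4ε²),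 μ = K1 + (δ/2)K3, and ψ = δ(K1 + (δ/2)K3) + (K2²δ²/(2m))(Mδ/m + 2). -/
/-!
The correction step is a gradient step on `f(·, t_{k+1})`, which is `m`-strongly convex with
`M`-Lipschitz gradient: the descent lemma lowers `f` by `ακ‖∇f‖²`, and the Polyak–Łojasiewicz
inequality `2m (f x - f*) ≤ ‖∇f x‖²` turns this into a contraction of the optimality gap by
`1 - 2καm`. The prediction step moves `x_k` a distance `Δ/‖g‖ ≤ K₁δ/ε` against the old gradient
`g`, so smoothness and `‖∇f(x, t + δ) - ∇f(x, t)‖ ≤ K₂δ` bound the increase of `f(·, t_{k+1})`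
by `γ'δ² - 2K₁δ`. The remaining `2K₁δ` (covered by `μδ + ψ` when no prediction is made) pays for
the drift of `f(x_k, ·)` and of `f*` over one sampling interval.
-/

open RealInnerProductSpace Set

section InnerProductSpace

variable {E : Type*} [NormedAddCommGroup E] [InnerProductSpace ℝ E] [CompleteSpace E]
  {f : E → ℝ} {g : E → E} {m M : ℝ}

theorem HasGradientAt.hasDerivAt_comp_add_smul {f' x d : E} {s : ℝ}
    (hf : HasGradientAt f f' (x + s • d)) :
    HasDerivAt (fun s : ℝ => f (x + s • d)) ⟪f', d⟫ s := by
  have hline : HasDerivAt (fun s : ℝ => x + s • d) d s := by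
    simpa using ((hasDerivAt_id s).smul_const d).const_add x
  simpa [Function.comp_def] using hf.hasFDerivAt.comp_hasDerivAt s hline

theorem HasGradientAt.neg {f' x : E} (hf : HasGradientAt f f' x) :
    HasGradientAt (fun y => -f y) (-f') x := by
  rw [hasGradientAt_iff_hasFDerivAt] at hf
  rw [hasGradientAt_iff_hasFDerivAt, map_neg]
  exact hf.neg

theorem le_add_inner_add_sq_of_inner_gradient_sub_le {c : ℝ} {x : E}
    (hf : ∀ z, HasGradientAt f (g z) z) (hg : ∀ z, ⟪g z - g x, z - x⟫ ≤ c * ‖z - x‖ ^ 2)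
    (y : E) : f y ≤ f x + ⟪g x, y - x⟫ + c / 2 * ‖y - x‖ ^ 2 := by
  set d := y - x
  set φ : ℝ → ℝ := fun s => f (x + s • d) - s * ⟪g x, d⟫ - c / 2 * s ^ 2 * ‖d‖ ^ 2
  have hφ : ∀ s, HasDerivAt φ (⟪g (x + s • d) - g x, d⟫ - c * s * ‖d‖ ^ 2) s := by
    intro s
    have := (((hf (x + s • d)).hasDerivAt_comp_add_smul).sub
      ((hasDerivAt_id s).mul_const ⟪g x, d⟫)).sub
      (((hasDerivAt_pow 2 s).const_mul (c / 2)).mul_const (‖d‖ ^ 2))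
    refine this.congr_deriv ?_
    rw [inner_sub_left]; push_cast; ring
  have hanti : AntitoneOn φ (Icc 0 1) := by
    refine antitoneOn_of_hasDerivWithinAt_nonpos (convex_Icc 0 1)
      (fun s _ => (hφ s).continuousAt.continuousWithinAt) (fun s _ => (hφ s).hasDerivWithinAt) ?_
    intro s hs
    rw [interior_Icc] at hs
    have key := hg (x + s • d)
    rw [add_sub_cancel_left, real_inner_smul_right, norm_smul, Real.norm_of_nonneg hs.1.le] at key
    nlinarith [hs.1]
  have := hanti (left_mem_Icc.2 zero_le_one) (right_mem_Icc.2 zero_le_one) zero_le_one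
  simp only [φ, d, one_smul, zero_smul, add_zero, add_sub_cancel] at this
  linarith

theorem le_add_inner_add_sq_of_lipschitz (hf : ∀ z, HasGradientAt f (g z) z)
    (hg : ∀ x y, ‖g x - g y‖ ≤ M * ‖x - y‖) (x y : E) :
    f y ≤ f x + ⟪g x, y - x⟫ + M / 2 * ‖y - x‖ ^ 2 :=
  le_add_inner_add_sq_of_inner_gradient_sub_le hf (fun z => calc
    ⟪g z - g x, z - x⟫ ≤ ‖g z - g x‖ * ‖z - x‖ := real_inner_le_norm _ _
    _ ≤ M * ‖z - x‖ * ‖z - x‖ := by gcongr; exact hg z x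
    _ = M * ‖z - x‖ ^ 2 := by ring) y

theorem add_inner_add_sq_le_of_strongMonotone (hf : ∀ z, HasGradientAt f (g z) z)
    (hg : ∀ x y, m * ‖x - y‖ ^ 2 ≤ ⟪g x - g y, x - y⟫) (x y : E) :
    f x + ⟪g x, y - x⟫ + m / 2 * ‖y - x‖ ^ 2 ≤ f y := by
  have := le_add_inner_add_sq_of_inner_gradient_sub_le (g := fun z => -g z) (c := -m)
    (fun z => (hf z).neg) (fun z => by rw [← neg_sub', inner_neg_left]; linarith [hg z x]) y
  rw [inner_neg_left] at this
  linarith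

theorem two_mul_sub_le_norm_sq_of_strongMonotone (hm : 0 < m)
    (hf : ∀ z, HasGradientAt f (g z) z) (hg : ∀ x y, m * ‖x - y‖ ^ 2 ≤ ⟪g x - g y, x - y⟫)
    (x p : E) : 2 * m * (f x - f p) ≤ ‖g x‖ ^ 2 := by
  have hlow := add_inner_add_sq_le_of_strongMonotone hf hg x p
  have hcs := neg_le_of_abs_le (abs_real_inner_le_norm (g x) (p - x))
  nlinarith [sq_nonneg (‖g x‖ - m * ‖p - x‖)]

theorem sub_smul_gradient_le (hf : ∀ z, HasGradientAt f (g z) z)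
    (hg : ∀ x y, ‖g x - g y‖ ≤ M * ‖x - y‖) (x : E) {α : ℝ} (hα : 0 ≤ α) :
    f (x - α • g x) ≤ f x - α * (1 - α * M / 2) * ‖g x‖ ^ 2 := by
  have := le_add_inner_add_sq_of_lipschitz hf hg x (x - α • g x)
  rw [sub_sub_cancel_left, inner_neg_right, real_inner_smul_right, real_inner_self_eq_norm_sq,
    norm_neg, norm_smul, Real.norm_of_nonneg hα] at this
  linarith

theorem sub_smul_gradient_sub_le (hm : 0 < m) (hf : ∀ z, HasGradientAt f (g z) z)
    (hsc : ∀ x y, m * ‖x - y‖ ^ 2 ≤ ⟪g x - g y, x - y⟫)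
    (hL : ∀ x y, ‖g x - g y‖ ≤ M * ‖x - y‖) {α : ℝ} (hα : 0 ≤ α) (hαM : α * M ≤ 2) (x p : E) :
    f (x - α • g x) - f p ≤ (1 - 2 * (1 - α * M / 2) * α * m) * (f x - f p) := by
  have hdesc := sub_smul_gradient_le hf hL x hα
  have hPL := two_mul_sub_le_norm_sq_of_strongMonotone hm hf hsc x p
  have hκ : 0 ≤ α * (1 - α * M / 2) := mul_nonneg hα (by linarith)
  nlinarith [mul_le_mul_of_nonneg_left hPL hκ]

theorem apply_sub_div_norm_sq_smul_le (hf : ∀ z, HasGradientAt f (g z) z)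
    (hg : ∀ x y, ‖g x - g y‖ ≤ M * ‖x - y‖) (hM : 0 ≤ M) {Δ D ε η : ℝ} (hΔ : 0 ≤ Δ)
    (hΔD : Δ ≤ D) (hε : 0 < ε) {x v : E} (hv : ε ≤ ‖v‖) (hgv : ‖g x - v‖ ≤ η) :
    f (x - (Δ / ‖v‖ ^ 2) • v) ≤ f x + η * (D / ε) + M / 2 * (D / ε) ^ 2 := by
  have hv0 : 0 < ‖v‖ := hε.trans_le hv
  set d := x - (Δ / ‖v‖ ^ 2) • v - x
  have hd : d = -((Δ / ‖v‖ ^ 2) • v) := sub_sub_cancel_left _ _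
  have hdnorm : ‖d‖ ≤ D / ε := by
    rw [hd, norm_neg, norm_smul, Real.norm_of_nonneg (by positivity)]
    calc Δ / ‖v‖ ^ 2 * ‖v‖ = Δ / ‖v‖ := by field_simp
      _ ≤ Δ / ε := div_le_div_of_nonneg_left hΔ hε hv
      _ ≤ D / ε := by gcongr
  have hvd : ⟪v, d⟫ = -Δ := by
    rw [hd, inner_neg_right, real_inner_smul_right, real_inner_self_eq_norm_sq]
    field_simp
  have hgd : ⟪g x, d⟫ ≤ η * (D / ε) := calc
    ⟪g x, d⟫ = ⟪g x - v, d⟫ + ⟪v, d⟫ := by rw [inner_sub_left]; ring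
    _ ≤ ‖g x - v‖ * ‖d‖ + 0 := by gcongr; exact real_inner_le_norm _ _; linarith
    _ ≤ η * (D / ε) := by
        rw [add_zero]; exact mul_le_mul hgv hdnorm (norm_nonneg _) ((norm_nonneg _).trans hgv)
  have := le_add_inner_add_sq_of_lipschitz hf hg x (x - (Δ / ‖v‖ ^ 2) • v)
  have hsq : ‖d‖ ^ 2 ≤ (D / ε) ^ 2 := pow_le_pow_left₀ (norm_nonneg _) hdnorm 2
  nlinarith

end InnerProductSpace

theorem norm_sub_le_mul_of_hasDerivAt {F : Type*} [NormedAddCommGroup F] [NormedSpace ℝ F]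
    {h h' : ℝ → F} {K a b : ℝ} (hab : a ≤ b) (hd : ∀ t ∈ Icc a b, HasDerivAt h (h' t) t)
    (hK : ∀ t ∈ Icc a b, ‖h' t‖ ≤ K) : ‖h b - h a‖ ≤ K * (b - a) :=
  norm_image_sub_le_of_norm_deriv_le_segment' (fun t ht => (hd t ht).hasDerivWithinAt)
    (fun t ht => hK t (Ico_subset_Icc_self ht)) b (right_mem_Icc.2 hab)

theorem two_mul_add_le_gamma_mul_sq {K1 K2 K3 M δ ε γ' : ℝ} (hδ : 0 < δ) (hε : 0 < ε)
    (hM : 0 ≤ M) (hK2 : 0 ≤ K2) (hK3 : 0 ≤ K3)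
    (hγ' : γ' = K3 + 2 * K1 / δ + K1 ^ 2 * M / ε ^ 2 + K2 * (K1 + δ / 2 * K3) / ε
        + δ ^ 2 * K3 ^ 2 * M / (4 * ε ^ 2)) :
    2 * K1 * δ + K2 * δ * (K1 * δ / ε) + M / 2 * (K1 * δ / ε) ^ 2 ≤ γ' * δ ^ 2 := by
  have hexpand : γ' * δ ^ 2 = 2 * K1 * δ + K2 * δ * (K1 * δ / ε) + M * (K1 * δ / ε) ^ 2
      + (K3 * δ ^ 2 + K2 * K3 * δ ^ 3 / (2 * ε) + M * K3 ^ 2 * δ ^ 4 / (4 * ε ^ 2)) := by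
    rw [hγ']; field_simp; ring
  have hrest : 0 ≤ M / 2 * (K1 * δ / ε) ^ 2
      + (K3 * δ ^ 2 + K2 * K3 * δ ^ 3 / (2 * ε) + M * K3 ^ 2 * δ ^ 4 / (4 * ε ^ 2)) := by
    positivity
  linarith

theorem alg2_one_step_recursion_general
    {E : Type*} [NormedAddCommGroup E] [InnerProductSpace ℝ E] [CompleteSpace E]
    (f : E → ℝ → ℝ) (gx : E → ℝ → E) (ft : E → ℝ → ℝ)
    (fxt : E → ℝ → E) (ftt : E → ℝ → ℝ) (xstar : ℝ → E)
    (m M K1 K2 K3 : ℝ) (hm : 0 < m) (hmM : m ≤ M)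
    (hgrad : ∀ (x : E) (t : ℝ), 0 ≤ t → HasGradientAt (fun y => f y t) (gx x t) x)
    (hft : ∀ (x : E) (t : ℝ), 0 ≤ t → HasDerivAt (fun s => f x s) (ft x t) t)
    (hfxt : ∀ (x : E) (t : ℝ), 0 ≤ t → HasDerivAt (fun s => gx x s) (fxt x t) t)
    (hsc : ∀ (t : ℝ), 0 ≤ t → ∀ x y : E, m * ‖x - y‖ ^ 2 ≤ ⟪gx x t - gx y t, x - y⟫)
    (hLip : ∀ (t : ℝ), 0 ≤ t → ∀ x y : E, ‖gx x t - gx y t‖ ≤ M * ‖x - y‖)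
    (hK1 : ∀ (x : E) (t : ℝ), 0 ≤ t → |ft x t| ≤ K1)
    (hK2 : ∀ (x : E) (t : ℝ), 0 ≤ t → ‖fxt x t‖ ≤ K2)
    (hK3 : ∀ (x : E) (t : ℝ), 0 ≤ t → |ftt x t| ≤ K3)
    (hmin : ∀ (t : ℝ), 0 ≤ t → IsMinOn (fun y => f y t) Set.univ (xstar t))
    (xk : E) (tk δ ε α : ℝ) (hδ : 0 < δ) (hδtk : δ ≤ tk) (hε : 0 < ε)
    (hα : 0 < α) (hαM : α ≤ 1 / (2 * M))
    (xminus xnext : E)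
    (hxminus : xminus =
      if ε ≤ ‖gx xk tk‖ then
        xk - (|f xk tk - f xk (tk - δ)| / ‖gx xk tk‖ ^ 2) • gx xk tk
      else xk)
    (hxnext : xnext = xminus - α • gx xminus (tk + δ))
    (κ γ' μ ψ : ℝ)
    (hκ : κ = 1 - α * M / 2)
    (hγ' : γ' = K3 + 2 * K1 / δ + K1 ^ 2 * M / ε ^ 2 + K2 * (K1 + δ / 2 * K3) / ε
        + δ ^ 2 * K3 ^ 2 * M / (4 * ε ^ 2))
    (hμ : μ = K1 + δ / 2 * K3)
    (hψ : ψ = δ * (K1 + δ / 2 * K3) + K2 ^ 2 * δ ^ 2 / (2 * m) * (M * δ / m + 2)) :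
    f xnext (tk + δ) - f (xstar (tk + δ)) (tk + δ) ≤
      (1 - 2 * κ * α * m) * max (γ' * δ ^ 2) (μ * δ)
        + (1 - 2 * κ * α * m) * (f xk tk - f (xstar tk) tk)
        + (1 - 2 * κ * α * m) * ψ := by
  have hM : 0 < M := hm.trans_le hmM
  have htk : 0 ≤ tk := hδ.le.trans hδtk
  have ht' : 0 ≤ tk + δ := by linarith
  have hK1n : 0 ≤ K1 := (abs_nonneg _).trans (hK1 xk tk htk)
  have hK2n : 0 ≤ K2 := (norm_nonneg _).trans (hK2 xk tk htk)
  have hK3n : 0 ≤ K3 := (abs_nonneg _).trans (hK3 xk tk htk)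
  have hαM' : α * M ≤ 1 / 2 := by rw [le_div_iff₀ (by positivity)] at hαM; linarith
  have hfdrift : ∀ x a, 0 ≤ a → |f x (a + δ) - f x a| ≤ K1 * δ := fun x a ha => by
    simpa using norm_sub_le_mul_of_hasDerivAt (by linarith : a ≤ a + δ)
      (fun t ht => hft x t (ha.trans ht.1)) (fun t ht => hK1 x t (ha.trans ht.1))
  have hstar : f (xstar tk) tk - f (xstar (tk + δ)) (tk + δ) ≤ K1 * δ := by
    have := isMinOn_univ_iff.1 (hmin tk htk) (xstar (tk + δ))
    linarith [(abs_le.1 (hfdrift (xstar (tk + δ)) tk htk)).1]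
  have hpred : f xminus (tk + δ) - f xk (tk + δ) + 2 * K1 * δ ≤ max (γ' * δ ^ 2) (μ * δ) + ψ := by
    split_ifs at hxminus with hcase
    · have hΔ : |f xk tk - f xk (tk - δ)| ≤ K1 * δ := by
        simpa using hfdrift xk (tk - δ) (by linarith)
      have hgdrift : ‖gx xk (tk + δ) - gx xk tk‖ ≤ K2 * δ := by
        simpa using norm_sub_le_mul_of_hasDerivAt (by linarith : tk ≤ tk + δ)
          (fun t ht => hfxt xk t (htk.trans ht.1)) (fun t ht => hK2 xk t (htk.trans ht.1))
      have hstep := hxminus ▸ apply_sub_div_norm_sq_smul_le (fun z => hgrad z _ ht')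
        (hLip _ ht') hM.le (abs_nonneg _) hΔ hε hcase hgdrift
      have hbudget := two_mul_add_le_gamma_mul_sq hδ hε hM.le hK2n hK3n hγ'
      have hψ0 : 0 ≤ ψ := by rw [hψ]; positivity
      linarith [le_max_left (γ' * δ ^ 2) (μ * δ)]
    · have hK3δ : 0 ≤ δ / 2 * K3 * δ := by positivity
      have hψK1 : K1 * δ ≤ ψ := by
        have : 0 ≤ K2 ^ 2 * δ ^ 2 / (2 * m) * (M * δ / m + 2) := by positivity
        rw [hψ]; linarith
      rw [hxminus, sub_self, hμ]
      linarith [le_max_right (γ' * δ ^ 2) ((K1 + δ / 2 * K3) * δ)]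
  have hstep2 : f xminus (tk + δ) - f (xstar (tk + δ)) (tk + δ)
      ≤ max (γ' * δ ^ 2) (μ * δ) + (f xk tk - f (xstar tk) tk) + ψ := by
    linarith [(abs_le.1 (hfdrift xk tk htk)).2]
  have hcontract : f xnext (tk + δ) - f (xstar (tk + δ)) (tk + δ)
      ≤ (1 - 2 * κ * α * m) * (f xminus (tk + δ) - f (xstar (tk + δ)) (tk + δ)) := by
    rw [hxnext, hκ]
    exact sub_smul_gradient_sub_le hm (fun z => hgrad z _ ht') (hsc _ ht') (hLip _ ht') hα.le
      (by linarith) xminus (xstar (tk + δ))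
  have hc : 0 ≤ 1 - 2 * κ * α * m := by
    rw [hκ]; nlinarith [mul_le_mul_of_nonneg_left hmM hα.le, mul_pos hα hm]
  calc _ ≤ _ := hcontract
    _ ≤ (1 - 2 * κ * α * m) * (max (γ' * δ ^ 2) (μ * δ) + (f xk tk - f (xstar tk) tk) + ψ) := by
        gcongr
    _ = _ := by ring

/-- one-step error recursion for Algorithm 2: with the
prediction step of Algorithm 2 (using the backward-difference estimate of
`∇_t f`) followed by the gradient update with `0 < α ≤ 1/(2M)`,
`f(x_{k+1},t_{k+1}) − f*(t_{k+1}) ≤ (1−2καm)·max(γ'δ², μδ)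
  + (1−2καm)(f(x_k,t_k) − f*(t_k)) + (1−2καm)·ψ`. -/
theorem alg2_one_step_recursion
    {E : Type*} [NormedAddCommGroup E] [InnerProductSpace ℝ E] [CompleteSpace E]
    (f : E → ℝ → ℝ) (gx : E → ℝ → E) (ft : E → ℝ → ℝ)
    (fxt : E → ℝ → E) (ftt : E → ℝ → ℝ) (xstar : ℝ → E)
    (m M K1 K2 K3 : ℝ) (hm : 0 < m) (hmM : m ≤ M)
    (hgrad : ∀ (x : E) (t : ℝ), 0 ≤ t → HasGradientAt (fun y => f y t) (gx x t) x)
    (hft : ∀ (x : E) (t : ℝ), 0 ≤ t → HasDerivAt (fun s => f x s) (ft x t) t)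
    (hfxt : ∀ (x : E) (t : ℝ), 0 ≤ t → HasDerivAt (fun s => gx x s) (fxt x t) t)
    (hftt : ∀ (x : E) (t : ℝ), 0 ≤ t → HasDerivAt (fun s => ft x s) (ftt x t) t)
    (hsc : ∀ (t : ℝ), 0 ≤ t → ∀ x y : E, m * ‖x - y‖ ^ 2 ≤ ⟪gx x t - gx y t, x - y⟫)
    (hLip : ∀ (t : ℝ), 0 ≤ t → ∀ x y : E, ‖gx x t - gx y t‖ ≤ M * ‖x - y‖)
    (hK1 : ∀ (x : E) (t : ℝ), 0 ≤ t → |ft x t| ≤ K1)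
    (hK2 : ∀ (x : E) (t : ℝ), 0 ≤ t → ‖fxt x t‖ ≤ K2)
    (hK3 : ∀ (x : E) (t : ℝ), 0 ≤ t → |ftt x t| ≤ K3)
    (hmin : ∀ (t : ℝ), 0 ≤ t → IsMinOn (fun y => f y t) Set.univ (xstar t))
    (xk : E) (tk δ ε α : ℝ) (hδ : 0 < δ) (hδtk : δ ≤ tk) (hε : 0 < ε)
    (hα : 0 < α) (hαM : α ≤ 1 / (2 * M))
    (xminus xnext : E)
    (hxminus : xminus =
      if ε ≤ ‖gx xk tk‖ then
        xk - (|f xk tk - f xk (tk - δ)| / ‖gx xk tk‖ ^ 2) • gx xk tk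
      else xk)
    (hxnext : xnext = xminus - α • gx xminus (tk + δ))
    (κ γ' μ ψ : ℝ)
    (hκ : κ = 1 - α * M / 2)
    (hγ' : γ' = K3 + 2 * K1 / δ + K1 ^ 2 * M / ε ^ 2 + K2 * (K1 + δ / 2 * K3) / ε
        + δ ^ 2 * K3 ^ 2 * M / (4 * ε ^ 2))
    (hμ : μ = K1 + δ / 2 * K3)
    (hψ : ψ = δ * (K1 + δ / 2 * K3) + K2 ^ 2 * δ ^ 2 / (2 * m) * (M * δ / m + 2)) :
    f xnext (tk + δ) - f (xstar (tk + δ)) (tk + δ) ≤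
      (1 - 2 * κ * α * m) * max (γ' * δ ^ 2) (μ * δ)
        + (1 - 2 * κ * α * m) * (f xk tk - f (xstar tk) tk)
        + (1 - 2 * κ * α * m) * ψ :=
  alg2_one_step_recursion_general f gx ft fxt ftt xstar m M K1 K2 K3 hm hmM hgrad hft hfxt hsc hLip
    hK1 hK2 hK3 hmin xk tk δ ε α hδ hδtk hε hα hαM xminus xnext hxminus hxnext κ γ' μ ψ hκ hγ' hμ hψ
end
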